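/- arXiv:2011.13595 — 2 statements merged into one kernel-verified Lean document; each statement's English description precedes it below -/
import Mathlib

section
/- Let χ be a locally finite subset of ℝ^d, and let (r^-(c))_{c∈χ} and (r^+(c))_{c∈χ} be two families of nonnegative real numbers with r^-(c) ≤ r^+(c) for all c ∈ χ; extend r^- and r^+ by 0 outside χ, and set ξ^- = {(c, r^-(c)) : c ∈ χ, r^-(c) > 0} and ξ^+ = {(c, r^+(c)) : c ∈ χ, r^+(c) > 0}. Then for every path π = (x_0,…,x_n): τ̃(π;ξ^-) ≤ τ̃(π;ξ^+) + 2 Σ_{i=1}^{n−1} (r^+(x_i) − r^-(x_i)). -/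
open MeasureTheory Set

noncomputable section

/-- Euclidean space `ℝ^d`. -/
abbrev Euc (d : ℕ) : Type := EuclideanSpace ℝ (Fin d)

/-- A configuration: a locally finite collection of open balls of `ℝ^d`, encoded by its
radius function `radius : ℝ^d → [0,∞)`, where `radius c > 0` iff `c` is the center of a
ball of the configuration (each center carries a unique radius, so a configuration is the
same as a locally finite subset of `ℝ^d × (0,∞)` whose first coordinates are distinct).
Local finiteness in `ℝ^d × (0,∞)`: every bounded region of `ℝ^d` contains finitely many
centers of radius at least `ε`, for every `ε > 0`. -/
structure Config (d : ℕ) where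
  radius : Euc d → ℝ
  radius_nonneg : ∀ c, 0 ≤ radius c
  locFin : ∀ s : Set (Euc d), Bornology.IsBounded s →
    ∀ ε : ℝ, 0 < ε → {c | c ∈ s ∧ ε ≤ radius c}.Finite

namespace Config

/-- `Σ(ξ)`: the union of the open balls of the configuration. -/
def sigma {d : ℕ} (ξ : Config d) : Set (Euc d) :=
  ⋃ c, Metric.ball c (ξ.radius c)

/-- The restriction of a configuration to a subset `S` of its centers. -/
def restrict {d : ℕ} (ξ : Config d) (S : Set (Euc d)) : Config d where
  radius := S.indicator ξ.radius
  radius_nonneg c := Set.indicator_nonneg (fun a _ => ξ.radius_nonneg a) c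
  locFin s hs ε hε := by
    refine (ξ.locFin s hs ε hε).subset ?_
    rintro c ⟨h1, h2⟩
    refine ⟨h1, ?_⟩
    by_cases h : c ∈ S
    · rwa [Set.indicator_of_mem h] at h2
    · rw [Set.indicator_of_notMem h] at h2; linarith

/-- The configuration keeping only the balls of radius `> θ`. -/
def threshold {d : ℕ} (ξ : Config d) (θ : ℝ) : Config d where
  radius c := if θ < ξ.radius c then ξ.radius c else 0
  radius_nonneg c := by
    try dsimp only
    split
    · exact ξ.radius_nonneg c
    · exact le_rfl
  locFin s hs ε hε := by
    refine (ξ.locFin s hs ε hε).subset ?_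
    rintro c ⟨h1, h2⟩
    refine ⟨h1, ?_⟩
    try dsimp only at h2
    split_ifs at h2 with h
    · exact h2
    · linarith

end Config

variable {d : ℕ}

/-- `τ(x,y;ξ)`: the one-dimensional Lebesgue measure of `[x,y] ∖ Σ(ξ)`. -/
def segTau (ξ : Config d) (a b : Euc d) : ℝ :=
  ‖b - a‖ * (volume {t : ℝ | t ∈ Icc (0:ℝ) 1 ∧ a + t • (b - a) ∉ ξ.sigma}).toReal

/-- `ℓ(π)`: the Euclidean length of a finite sequence of points. -/
def pathLen (n : ℕ) (x : Fin (n+1) → Euc d) : ℝ :=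
  ∑ i : Fin n, dist (x i.castSucc) (x i.succ)

/-- `τ(π;ξ)`, the travel time of a path. -/
def pathTau (ξ : Config d) (n : ℕ) (x : Fin (n+1) → Euc d) : ℝ :=
  ∑ i : Fin n, segTau ξ (x i.castSucc) (x i.succ)

/-- The radius of the ball `Z_i^+(π;ξ)` removed at the left endpoint of segment `i`
(zero when the left endpoint is `x_0`, following `Z_0^+ = ∅`). -/
def leftR (ξ : Config d) {n : ℕ} (x : Fin (n+1) → Euc d) (i : Fin n) : ℝ :=
  if (i : ℕ) = 0 then 0 else ξ.radius (x i.castSucc)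

/-- The radius of the ball `Z_{i+1}^-(π;ξ)` removed at the right endpoint of segment `i`
(zero when the right endpoint is `x_n`, following `Z_n^- = ∅`). -/
def rightR (ξ : Config d) {n : ℕ} (x : Fin (n+1) → Euc d) (i : Fin n) : ℝ :=
  if (i : ℕ) + 1 = n then 0 else ξ.radius (x i.succ)

/-- The local travel time of the segment `[a,b]` with removed balls of radii `rl` at `a`
and `rr` at `b`: the length of `[a,b] ∖ (B(a,rl) ∪ B(b,rr))`. -/
def locSegTau (rl rr : ℝ) (a b : Euc d) : ℝ :=
  ‖b - a‖ * (volume {t : ℝ | t ∈ Icc (0:ℝ) 1 ∧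
    a + t • (b - a) ∉ Metric.ball a rl ∪ Metric.ball b rr}).toReal

/-- `τ̃(π;ξ)`, the local travel time of a finite sequence of points. -/
def pathLocTau (ξ : Config d) (n : ℕ) (x : Fin (n+1) → Euc d) : ℝ :=
  ∑ i : Fin n, locSegTau (leftR ξ x i) (rightR ξ x i) (x i.castSucc) (x i.succ)

/-- `π` is a `ξ`-good path: interior points are centers of `ξ`, and on each segment the
removed set `Z_{i-1}^+ ∪ Z_i^-` coincides with `Σ(ξ)`. -/
def IsGood (ξ : Config d) (n : ℕ) (x : Fin (n+1) → Euc d) : Prop :=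
  (∀ i : Fin (n+1), 0 < (i : ℕ) → (i : ℕ) < n → 0 < ξ.radius (x i)) ∧
  ∀ i : Fin n,
    segment ℝ (x i.castSucc) (x i.succ) ∩
      (Metric.ball (x i.castSucc) (leftR ξ x i) ∪ Metric.ball (x i.succ) (rightR ξ x i)) =
    segment ℝ (x i.castSucc) (x i.succ) ∩ ξ.sigma

/-- `T(A,B;ξ)`: the infimum of travel times over paths (sequences of distinct points)
from `A` to `B`; `T(a,b;ξ)` is the special case `A = {a}`, `B = {b}`. -/
def Ttime (ξ : Config d) (A B : Set (Euc d)) : ℝ :=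
  sInf {v : ℝ | ∃ (n : ℕ) (x : Fin (n+1) → Euc d), Function.Injective x ∧
    x 0 ∈ A ∧ x (Fin.last n) ∈ B ∧ v = pathTau ξ n x}

/-- `T^□(a_0,…,a_k;ξ)`: infimum over pairwise disjoint finite subsets `ξ^1,…,ξ^k` of `ξ`
(given by disjoint finite sets of centers) of `Σ_j T(a_{j-1},a_j;ξ^j)`. -/
def TSq (ξ : Config d) (k : ℕ) (a : ℕ → Euc d) : ℝ :=
  sInf {v : ℝ | ∃ S : ℕ → Set (Euc d),
    (∀ j, (S j).Finite) ∧
    (∀ j, ∀ c ∈ S j, 0 < ξ.radius c) ∧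
    (∀ i j, i < k → j < k → i ≠ j → Disjoint (S i) (S j)) ∧
    v = ∑ j ∈ Finset.range k, Ttime (ξ.restrict (S j)) {a j} {a (j+1)}}

/-- The greedy functional `G(s;ξ)`: the supremum of `r(π;ξ)/ℓ(π)` over paths starting at
`0`, with at least two points, and at least one point outside the open ball `B(0,s)`. -/
def greedyG (ξ : Config d) (s : ℝ) : ℝ :=
  sSup {g : ℝ | ∃ (n : ℕ) (x : Fin (n+1) → Euc d), Function.Injective x ∧ 1 ≤ n ∧
    x 0 = 0 ∧ (∃ i : Fin (n+1), s ≤ ‖x i‖) ∧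
    g = (∑ i : Fin (n+1), ξ.radius (x i)) / pathLen n x}

/-- The vertices of a path, clamped: `clampPt n x j = x_{min(j,n)}`. -/
def clampPt (n : ℕ) (x : Fin (n+1) → Euc d) (j : ℕ) : Euc d :=
  x ⟨min j n, Nat.lt_succ_of_le (min_le_right j n)⟩

/-- Cumulative length of the first `j` segments of the path. -/
def cumLen (n : ℕ) (x : Fin (n+1) → Euc d) (j : ℕ) : ℝ :=
  ∑ i ∈ Finset.range j, dist (clampPt n x i) (clampPt n x (i+1))

/-- Index of the segment containing the arc-length parameter `t`. -/
def segIdx (n : ℕ) (x : Fin (n+1) → Euc d) (t : ℝ) : ℕ :=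
  sSup {j : ℕ | j ≤ n ∧ cumLen n x j ≤ t}

/-- The arc-length parametrization `[0,ℓ(π)] → ℝ^d` of the path. -/
def pathParam (n : ℕ) (x : Fin (n+1) → Euc d) (t : ℝ) : Euc d :=
  clampPt n x (segIdx n x t) +
    ((t - cumLen n x (segIdx n x t)) /
        dist (clampPt n x (segIdx n x t)) (clampPt n x (segIdx n x t + 1))) •
      (clampPt n x (segIdx n x t + 1) - clampPt n x (segIdx n x t))

/-- `(a_0,…,a_k)`, together with the times `(t_0,…,t_k)`, is the `ρ`-skeleton of the path
`π` (viewed as an arc-length parametrized curve): `t_0 = 0`, `a_i = π(t_i)`, each `t_{i+1}`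
is the first time after `t_i` at which the curve meets the sphere `S(a_i,ρ)`, and after
time `t_k` the curve stays inside the open ball `B(a_k,ρ)`. -/
structure IsSkeleton (n : ℕ) (x : Fin (n+1) → Euc d) (ρ : ℝ) (k : ℕ)
    (a : ℕ → Euc d) (t : ℕ → ℝ) : Prop where
  t_zero : t 0 = 0
  a_eq : ∀ i ≤ k, a i = pathParam n x (t i)
  t_mono : ∀ i < k, t i < t (i + 1)
  t_mem : ∀ i ≤ k, 0 ≤ t i ∧ t i ≤ pathLen n x
  stays : ∀ i < k, ∀ s, t i ≤ s → s < t (i + 1) → pathParam n x s ∈ Metric.ball (a i) ρ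
  exits : ∀ i < k, dist (pathParam n x (t (i + 1))) (a i) = ρ
  final : ∀ s, t k ≤ s → s ≤ pathLen n x → pathParam n x s ∈ Metric.ball (a k) ρ

/-! On a segment of length `L`, removing balls of radii `rl, rr ≥ 0` around its endpoints
leaves a sub-segment of length `(L - rl - rr)⁺`, which is 1-Lipschitz in each radius. Every
interior vertex `x_i` is the right end of segment `i - 1` and the left end of segment `i`,
whence the factor `2`. -/

lemma locSegTau_eq_max {rl rr : ℝ} (hl : 0 ≤ rl) (hr : 0 ≤ rr) (a b : Euc d) :
    locSegTau rl rr a b = max (‖b - a‖ - rl - rr) 0 := by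
  unfold locSegTau
  obtain ⟨L, hab⟩ : ∃ L, dist a b = L := ⟨_, rfl⟩
  rw [dist_comm, dist_eq_norm] at hab
  rw [hab]
  rcases (norm_nonneg (b - a)).eq_or_lt with hL | hL
  · rw [← hab, ← hL, zero_mul, zero_sub]
    exact (max_eq_right (by linarith)).symm
  rw [hab] at hL
  have hset : {t : ℝ | t ∈ Icc (0:ℝ) 1 ∧ a + t • (b - a) ∉ Metric.ball a rl ∪ Metric.ball b rr}
      = Icc (rl / L) (1 - rr / L) := by
    ext t
    have hpt : a + t • (b - a) = AffineMap.lineMap a b t := by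
      rw [AffineMap.lineMap_apply_module', add_comm]
    simp only [mem_ofPred_eq, mem_Icc, mem_union, Metric.mem_ball, not_or, not_lt, hpt,
      dist_lineMap_left, dist_lineMap_right, dist_comm a b, dist_eq_norm b a, hab,
      Real.norm_eq_abs]
    rw [div_le_iff₀ hL, le_sub_comm, div_le_iff₀ hL]
    constructor
    · rintro ⟨⟨ht0, ht1⟩, hla, hrb⟩
      rw [abs_of_nonneg ht0] at hla
      rw [abs_of_nonneg (by linarith)] at hrb
      exact ⟨hla, hrb⟩
    · rintro ⟨hla, hrb⟩
      have ht0 : 0 ≤ t := by nlinarith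
      have ht1 : t ≤ 1 := by nlinarith
      rw [abs_of_nonneg ht0, abs_of_nonneg (by linarith : (0:ℝ) ≤ 1 - t)]
      exact ⟨⟨ht0, ht1⟩, by linarith, by linarith⟩
  rw [hset, Real.volume_Icc, ENNReal.toReal_ofReal', mul_max_of_nonneg _ _ hL.le, mul_zero]
  congr 1
  field_simp
  ring

lemma locSegTau_le_add {rl rr rl' rr' : ℝ} (hl : 0 ≤ rl) (hr : 0 ≤ rr) (hll : rl ≤ rl')
    (hrr : rr ≤ rr') (a b : Euc d) :
    locSegTau rl rr a b ≤ locSegTau rl' rr' a b + ((rl' - rl) + (rr' - rr)) := by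
  rw [locSegTau_eq_max hl hr, locSegTau_eq_max (hl.trans hll) (hr.trans hrr)]
  refine max_le ?_ ?_
  · linarith [le_max_left (‖b - a‖ - rl' - rr') 0]
  · linarith [le_max_right (‖b - a‖ - rl' - rr') 0]

lemma leftR_nonneg (ξ : Config d) {n : ℕ} (x : Fin (n+1) → Euc d) (i : Fin n) :
    0 ≤ leftR ξ x i := by
  unfold leftR; split_ifs; exacts [le_rfl, ξ.radius_nonneg _]

lemma rightR_nonneg (ξ : Config d) {n : ℕ} (x : Fin (n+1) → Euc d) (i : Fin n) :
    0 ≤ rightR ξ x i := by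
  unfold rightR; split_ifs; exacts [le_rfl, ξ.radius_nonneg _]

lemma leftR_mono {ξ ξ' : Config d} (h : ∀ c, ξ.radius c ≤ ξ'.radius c) {n : ℕ}
    (x : Fin (n+1) → Euc d) (i : Fin n) : leftR ξ x i ≤ leftR ξ' x i := by
  unfold leftR; split_ifs; exacts [le_rfl, h _]

lemma rightR_mono {ξ ξ' : Config d} (h : ∀ c, ξ.radius c ≤ ξ'.radius c) {n : ℕ}
    (x : Fin (n+1) → Euc d) (i : Fin n) : rightR ξ x i ≤ rightR ξ' x i := by
  unfold rightR; split_ifs; exacts [le_rfl, h _]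

lemma sum_leftR (ξ : Config d) {n : ℕ} (x : Fin (n+1) → Euc d) :
    ∑ i, leftR ξ x i =
      ∑ j ∈ Finset.univ.filter (fun j : Fin (n+1) => 0 < (j : ℕ) ∧ (j : ℕ) < n),
        ξ.radius (x j) := by
  rw [Finset.sum_filter, Fin.sum_univ_castSucc]
  simp only [Fin.val_castSucc, Fin.val_last, lt_irrefl, and_false, if_false, add_zero,
    Fin.is_lt, and_true, leftR, pos_iff_ne_zero, ite_not]

lemma sum_rightR (ξ : Config d) {n : ℕ} (x : Fin (n+1) → Euc d) :
    ∑ i, rightR ξ x i =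
      ∑ j ∈ Finset.univ.filter (fun j : Fin (n+1) => 0 < (j : ℕ) ∧ (j : ℕ) < n),
        ξ.radius (x j) := by
  rw [Finset.sum_filter, Fin.sum_univ_succ, Fin.val_zero, if_neg (by omega), zero_add]
  refine Finset.sum_congr rfl fun i _ => ?_
  have hi := i.is_lt
  simp only [rightR, Fin.val_succ, Nat.succ_pos, true_and]
  split_ifs <;> first | rfl | omega

theorem stmt5_general {d : ℕ} (ξm ξp : Config d)
    (hle : ∀ c, ξm.radius c ≤ ξp.radius c)
    (n : ℕ) (x : Fin (n+1) → Euc d) :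
    pathLocTau ξm n x ≤ pathLocTau ξp n x +
      2 * ∑ i ∈ Finset.univ.filter (fun i : Fin (n+1) => 0 < (i : ℕ) ∧ (i : ℕ) < n),
        (ξp.radius (x i) - ξm.radius (x i)) := by
  calc pathLocTau ξm n x
      ≤ ∑ i, (locSegTau (leftR ξp x i) (rightR ξp x i) (x i.castSucc) (x i.succ) +
          ((leftR ξp x i - leftR ξm x i) + (rightR ξp x i - rightR ξm x i))) :=
        Finset.sum_le_sum fun i _ => locSegTau_le_add (leftR_nonneg ξm x i)
          (rightR_nonneg ξm x i) (leftR_mono hle x i) (rightR_mono hle x i) _ _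
    _ = pathLocTau ξp n x + ((∑ i, leftR ξp x i - ∑ i, leftR ξm x i) +
          (∑ i, rightR ξp x i - ∑ i, rightR ξm x i)) := by
        simp only [pathLocTau, Finset.sum_add_distrib, Finset.sum_sub_distrib]
    _ = _ := by
        rw [sum_leftR, sum_leftR, sum_rightR, sum_rightR, Finset.sum_sub_distrib]
        ring

/-- Let χ be a locally finite subset of ℝ^d and (r^-(c)), (r^+(c)) two
families of nonnegative radii with r^- ≤ r^+, extended by 0 outside χ (encoded here by
two configurations with pointwise comparable radius functions). Then for every path
π = (x_0,…,x_n): τ̃(π;ξ^-) ≤ τ̃(π;ξ^+) + 2 Σ_{i=1}^{n−1} (r^+(x_i) − r^-(x_i)). -/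
theorem stmt5 {d : ℕ} (hd : 2 ≤ d) (ξm ξp : Config d)
    (hle : ∀ c, ξm.radius c ≤ ξp.radius c)
    (n : ℕ) (x : Fin (n+1) → Euc d) (hinj : Function.Injective x) :
    pathLocTau ξm n x ≤ pathLocTau ξp n x +
      2 * ∑ i ∈ Finset.univ.filter (fun i : Fin (n+1) => 0 < (i : ℕ) ∧ (i : ℕ) < n),
        (ξp.radius (x i) - ξm.radius (x i)) :=
  stmt5_general ξm ξp hle n x

end
end

section
/- Let χ be a locally finite subset of ℝ^d and let π = (x_0,…,x_n) be a path such that x_0 = 0 and every interior point x_1,…,x_{n−1} belongs to χ (a χ-regular path from 0). Let (a_0,…,a_k) be the 1-skeleton of π and assume k ≥ 1. Then ℓ(π) ≤ 2k + 2 + 2·card(χ ∩ ⋃_{j=0}^k B(a_j,1)). -/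
open MeasureTheory Set

noncomputable section

variable {d : ℕ}

/-!
Cut `[0, ℓ(π)]` both at the vertices of `π` (`n` intervals) and at the skeleton times
`t_1, …, t_k` (`k + 1` intervals). The common refinement has at most `n + k` nonempty pieces.
On each piece the curve runs at unit speed along a straight segment inside some closed ball
`B̄(a_j, 1)`, so each piece has length at most `2` and `ℓ(π) ≤ 2 (n + k)`. The `n - 1` interior
vertices are distinct points of `χ`, each in some `B(a_j, 1)`, so `n - 1 ≤ card (χ ∩ ⋃ B(a_j, 1))`.
-/

def overlapLen (a b u v : ℝ) : ℝ := max 0 (min b v - max a u)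

lemma overlapLen_eq_sub {a b u v : ℝ} (hab : a ≤ b) (huv : u ≤ v) :
    overlapLen a b u v = min b (max a v) - min b (max a u) := by
  unfold overlapLen
  rcases le_total v a with hva | hav
  · rw [max_eq_left hva, max_eq_left (huv.trans hva), sub_self, max_eq_left]
    linarith [min_le_right b v]
  rcases le_total b u with hbu | hub
  · rw [min_eq_left (hbu.trans huv), max_eq_right (hab.trans hbu), min_eq_left hbu,
      min_eq_left (hbu.trans (huv.trans (le_max_right a v))), sub_self,
      max_eq_left (by linarith)]
  · rw [max_eq_right hav, min_eq_right (max_le hab hub),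
      max_eq_right (sub_nonneg.2 (le_min (max_le hab hub) (max_le hav huv)))]

lemma sum_overlapLen_eq {g : ℕ → ℝ} (hg : Monotone g) {a b : ℝ} {m : ℕ}
    (hga : g 0 ≤ a) (hab : a ≤ b) (hbg : b ≤ g m) :
    ∑ j ∈ Finset.range m, overlapLen a b (g j) (g (j+1)) = b - a := by
  simp_rw [overlapLen_eq_sub hab (hg (Nat.le_succ _))]
  rw [Finset.sum_range_sub (fun j => min b (max a (g j))), max_eq_left hga,
    min_eq_right hab, max_eq_right (hab.trans hbg), min_eq_left hbg]

lemma eq_of_mem_Ico_of_monotone {α : Type*} [Preorder α] {f : ℕ → α} (hf : Monotone f) {s : α}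
    {i i' : ℕ} (hi : s ∈ Ico (f i) (f (i+1))) (hi' : s ∈ Ico (f i') (f (i'+1))) : i = i' := by
  by_contra hne
  rcases Nat.lt_or_gt_of_ne hne with h | h
  · exact lt_irrefl _ (hi'.1.trans_lt (hi.2.trans_le (hf (Nat.succ_le_of_lt h))))
  · exact lt_irrefl _ (hi.1.trans_lt (hi'.2.trans_le (hf (Nat.succ_le_of_lt h))))

/-- A positive overlap of two pieces starts at a breakpoint of one of the two partitions, and
determines both pieces; the breakpoint `g 0` never occurs since it is `≤ f 0`. -/
lemma card_filter_overlapLen_pos_le {f g : ℕ → ℝ} (hf : Monotone f) (hg : Monotone g)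
    (h0 : g 0 ≤ f 0) (m m' : ℕ) :
    (Finset.filter (fun p : ℕ × ℕ => 0 < overlapLen (f p.1) (f (p.1+1)) (g p.2) (g (p.2+1)))
      (Finset.range m ×ˢ Finset.range (m'+1))).card ≤ m + m' := by
  have hstart : ∀ {i j : ℕ}, 0 < overlapLen (f i) (f (i+1)) (g j) (g (j+1)) →
      max (f i) (g j) ∈ Ico (f i) (f (i+1)) ∧ max (f i) (g j) ∈ Ico (g j) (g (j+1)) := by
    intro i j hpos
    have hlt : max (f i) (g j) < min (f (i+1)) (g (j+1)) := by
      by_contra h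
      simp [overlapLen, max_eq_left (sub_nonpos.2 (not_lt.1 h))] at hpos
    exact ⟨⟨le_max_left _ _, hlt.trans_le (min_le_left _ _)⟩,
      ⟨le_max_right _ _, hlt.trans_le (min_le_right _ _)⟩⟩
  calc _ ≤ ((Finset.range m).image f ∪ (Finset.Ico 1 (m'+1)).image g).card := by
        refine Finset.card_le_card_of_injOn (fun p => max (f p.1) (g p.2)) ?_ ?_
        · rintro ⟨i, j⟩ hp
          simp only [Finset.coe_filter, Finset.mem_product, Finset.mem_range,
            Set.mem_ofPred_eq] at hp
          simp only [Finset.coe_union, Finset.coe_image, Finset.coe_range, Finset.coe_Ico,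
            Set.mem_union, Set.mem_image, Set.mem_Iio, Set.mem_Ico]
          rcases le_or_gt (g j) (f i) with hgf | hfg
          · exact Or.inl ⟨i, hp.1.1, (max_eq_left hgf).symm⟩
          · refine Or.inr ⟨j, ⟨Nat.one_le_iff_ne_zero.2 ?_, hp.1.2⟩, (max_eq_right hfg.le).symm⟩
            rintro rfl
            linarith [hf (Nat.zero_le i)]
        · rintro ⟨i, j⟩ hp ⟨i', j'⟩ hp' heq
          simp only [Finset.coe_filter, Set.mem_ofPred_eq] at hp hp' heq
          have h := hstart hp.2
          have h' := hstart hp'.2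
          rw [heq] at h
          rw [eq_of_mem_Ico_of_monotone hf h.1 h'.1, eq_of_mem_Ico_of_monotone hg h.2 h'.2]
    _ ≤ m + m' := by
        refine (Finset.card_union_le _ _).trans (add_le_add ?_ ?_)
        · exact Finset.card_image_le.trans (Finset.card_range m).le
        · exact Finset.card_image_le.trans (by simp)

lemma sub_le_of_overlapLen_le {f g : ℕ → ℝ} (hf : Monotone f) (hg : Monotone g) {m m' : ℕ}
    (h0 : g 0 ≤ f 0) (hm : f m ≤ g (m'+1)) {C : ℝ} (hC : 0 ≤ C)
    (hpiece : ∀ i < m, ∀ j ≤ m', 0 < overlapLen (f i) (f (i+1)) (g j) (g (j+1)) →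
      overlapLen (f i) (f (i+1)) (g j) (g (j+1)) ≤ C) :
    f m - f 0 ≤ C * (m + m') := by
  set F : ℕ × ℕ → ℝ := fun p => overlapLen (f p.1) (f (p.1+1)) (g p.2) (g (p.2+1))
  have hsum : f m - f 0 = ∑ p ∈ Finset.range m ×ˢ Finset.range (m'+1), F p := by
    rw [Finset.sum_product, ← Finset.sum_range_sub f m]
    refine Finset.sum_congr rfl fun i hi => (sum_overlapLen_eq hg ?_ (hf i.le_succ) ?_).symm
    · exact h0.trans (hf (Nat.zero_le i))
    · exact (hf (Finset.mem_range.1 hi)).trans hm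
  rw [hsum, ← Finset.sum_filter_of_ne (p := fun p => 0 < F p) fun p _ hp =>
    lt_of_le_of_ne (le_max_left _ _) (Ne.symm hp)]
  calc _ ≤ (Finset.filter (fun p => 0 < F p)
          (Finset.range m ×ˢ Finset.range (m'+1))).card • C := by
        refine Finset.sum_le_card_nsmul _ _ _ fun p hp => ?_
        simp only [Finset.mem_filter, Finset.mem_product, Finset.mem_range] at hp
        exact hpiece p.1 hp.1.1 p.2 (Nat.lt_succ_iff.1 hp.1.2) hp.2
    _ ≤ C * (m + m') := by
        rw [nsmul_eq_mul, mul_comm]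
        exact mul_le_mul_of_nonneg_left
          (by exact_mod_cast card_filter_overlapLen_pos_le hf hg h0 m m') hC

section ArcLength

variable {n : ℕ} {x : Fin (n+1) → Euc d}

lemma clampPt_of_le {j : ℕ} (hj : j ≤ n) : clampPt n x j = x ⟨j, Nat.lt_succ_of_le hj⟩ := by
  simp [clampPt, min_eq_left hj]

lemma cumLen_zero : cumLen n x 0 = 0 := Finset.sum_range_zero _

lemma cumLen_mono : Monotone (cumLen n x) := fun _ _ hij =>
  Finset.sum_le_sum_of_subset_of_nonneg (Finset.range_subset_range.2 hij)
    fun _ _ _ => dist_nonneg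

lemma cumLen_nonneg (j : ℕ) : 0 ≤ cumLen n x j :=
  cumLen_zero (x := x) ▸ cumLen_mono (Nat.zero_le j)

lemma cumLen_self : cumLen n x n = pathLen n x := by
  rw [cumLen, pathLen, ← Fin.sum_univ_eq_sum_range]
  refine Finset.sum_congr rfl fun i _ => ?_
  rw [clampPt_of_le i.isLt.le, clampPt_of_le i.isLt]
  rfl

lemma dist_succ_pos (hinj : Function.Injective x) {i : ℕ} (hi : i < n) :
    0 < dist (x ⟨i, Nat.lt_succ_of_le hi.le⟩) (x ⟨i+1, Nat.succ_lt_succ hi⟩) :=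
  dist_pos.2 fun h => by simpa [Fin.ext_iff] using hinj h

lemma cumLen_succ_of_lt {i : ℕ} (hi : i < n) :
    cumLen n x (i+1) =
      cumLen n x i + dist (x ⟨i, Nat.lt_succ_of_le hi.le⟩) (x ⟨i+1, Nat.succ_lt_succ hi⟩) := by
  rw [cumLen, Finset.sum_range_succ, clampPt_of_le hi.le, clampPt_of_le hi]
  rfl

lemma segIdx_eq {i : ℕ} {s : ℝ} (hi : i ≤ n) (h1 : cumLen n x i ≤ s)
    (h2 : i = n ∨ s < cumLen n x (i+1)) : segIdx n x s = i := by
  have hbdd : BddAbove {j | j ≤ n ∧ cumLen n x j ≤ s} := ⟨n, fun j hj => hj.1⟩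
  refine le_antisymm (csSup_le ⟨i, hi, h1⟩ ?_) (le_csSup hbdd ⟨hi, h1⟩)
  rintro j ⟨hjn, hjs⟩
  by_contra! hij
  rcases h2 with rfl | h2
  · omega
  · linarith [cumLen_mono (x := x) (Nat.succ_le_of_lt hij)]

lemma pathParam_cumLen (hinj : Function.Injective x) {i : ℕ} (hi : i ≤ n) :
    pathParam n x (cumLen n x i) = x ⟨i, Nat.lt_succ_of_le hi⟩ := by
  have hseg : segIdx n x (cumLen n x i) = i := by
    refine segIdx_eq hi le_rfl (hi.eq_or_lt.imp id fun hi => ?_)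
    rw [cumLen_succ_of_lt hi]
    linarith [dist_succ_pos hinj hi]
  rw [pathParam, hseg, sub_self, zero_div, zero_smul, add_zero, clampPt_of_le hi]

lemma pathParam_of_mem_Icc (hinj : Function.Injective x) {i : ℕ} (hi : i < n) {s : ℝ}
    (hs : s ∈ Icc (cumLen n x i) (cumLen n x (i+1))) :
    pathParam n x s = x ⟨i, Nat.lt_succ_of_le hi.le⟩ +
      ((s - cumLen n x i) / dist (x ⟨i, Nat.lt_succ_of_le hi.le⟩) (x ⟨i+1, Nat.succ_lt_succ hi⟩)) •
        (x ⟨i+1, Nat.succ_lt_succ hi⟩ - x ⟨i, Nat.lt_succ_of_le hi.le⟩) := by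
  rcases hs.2.eq_or_lt with rfl | hlt
  · rw [pathParam_cumLen hinj hi, cumLen_succ_of_lt hi, add_sub_cancel_left,
      div_self (dist_succ_pos hinj hi).ne', one_smul, add_sub_cancel]
  · rw [pathParam, segIdx_eq hi.le hs.1 (Or.inr hlt), clampPt_of_le hi.le, clampPt_of_le hi]

lemma dist_pathParam (hinj : Function.Injective x) {i : ℕ} (hi : i < n) {s s' : ℝ}
    (h1 : cumLen n x i ≤ s) (hss' : s ≤ s') (h2 : s' ≤ cumLen n x (i+1)) :
    dist (pathParam n x s) (pathParam n x s') = s' - s := by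
  have hD := dist_succ_pos hinj hi
  rw [pathParam_of_mem_Icc hinj hi ⟨h1, hss'.trans h2⟩,
    pathParam_of_mem_Icc hinj hi ⟨h1.trans hss', h2⟩, dist_add_left, dist_eq_norm, ← sub_smul,
    norm_smul, div_sub_div_same, sub_sub_sub_cancel_right, ← dist_eq_norm', Real.norm_eq_abs,
    abs_div, abs_sub_comm, abs_of_nonneg (sub_nonneg.2 hss'), abs_of_pos hD,
    div_mul_cancel₀ _ hD.ne']

end ArcLength

/-- The skeleton times `t_0, …, t_k`, followed by `ℓ(π)`: a partition of `[0, ℓ(π)]` into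
`k + 1` intervals, the `j`-th of which the curve spends in the closed ball around `a_j`. -/
def skeletonBreak (n : ℕ) (x : Fin (n+1) → Euc d) (k : ℕ) (t : ℕ → ℝ) (j : ℕ) : ℝ :=
  if j ≤ k then t j else pathLen n x

namespace IsSkeleton

variable {n k : ℕ} {x : Fin (n+1) → Euc d} {ρ : ℝ} {a : ℕ → Euc d} {t : ℕ → ℝ}

lemma radius_pos (hsk : IsSkeleton n x ρ k a t) : 0 < ρ :=
  Metric.pos_of_mem_ball (hsk.final (t k) le_rfl (hsk.t_mem k le_rfl).2)

lemma monotone_skeletonBreak (hsk : IsSkeleton n x ρ k a t) :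
    Monotone (skeletonBreak n x k t) := by
  refine monotone_nat_of_le_succ fun j => ?_
  unfold skeletonBreak
  split_ifs with hj hj' hj'
  · exact (hsk.t_mono j (by omega)).le
  · exact (hsk.t_mem j hj).2
  · omega
  · exact le_rfl

lemma skeletonBreak_zero (hsk : IsSkeleton n x ρ k a t) : skeletonBreak n x k t 0 = 0 := by
  rw [skeletonBreak, if_pos (Nat.zero_le k), hsk.t_zero]

lemma pathParam_mem_closedBall (hsk : IsSkeleton n x ρ k a t) {j : ℕ} (hj : j ≤ k) {s : ℝ}
    (h1 : skeletonBreak n x k t j ≤ s) (h2 : s ≤ skeletonBreak n x k t (j+1)) :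
    pathParam n x s ∈ Metric.closedBall (a j) ρ := by
  rw [skeletonBreak, if_pos hj] at h1
  rcases hj.lt_or_eq with hj | rfl
  · rw [skeletonBreak, if_pos (Nat.succ_le_of_lt hj)] at h2
    rcases h2.lt_or_eq with h2 | rfl
    · exact Metric.ball_subset_closedBall (hsk.stays j hj s h1 h2)
    · exact Metric.mem_closedBall.2 (hsk.exits j hj).le
  · rw [skeletonBreak, if_neg (Nat.not_succ_le_self j)] at h2
    exact Metric.ball_subset_closedBall (hsk.final s h1 h2)

lemma exists_pathParam_mem_ball (hsk : IsSkeleton n x ρ k a t) {s : ℝ} (h0 : 0 ≤ s)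
    (hs : s ≤ pathLen n x) : ∃ j ≤ k, pathParam n x s ∈ Metric.ball (a j) ρ := by
  by_cases hks : t k ≤ s
  · exact ⟨k, le_rfl, hsk.final s hks hs⟩
  have hne : {j | j ≤ k ∧ t j ≤ s}.Nonempty := ⟨0, Nat.zero_le k, hsk.t_zero ▸ h0⟩
  have hbdd : BddAbove {j | j ≤ k ∧ t j ≤ s} := ⟨k, fun j hj => hj.1⟩
  obtain ⟨hjk, hjs⟩ := Nat.sSup_mem hne hbdd
  set j := sSup {j | j ≤ k ∧ t j ≤ s}
  have hjk : j < k := hjk.lt_of_ne fun h => hks (h ▸ hjs)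
  refine ⟨j, hjk.le, hsk.stays j hjk s hjs (not_le.1 fun h => ?_)⟩
  have : j + 1 ≤ j := le_csSup hbdd ⟨hjk, h⟩
  omega

/-- Each piece of the common refinement lies on one segment of `π`, where the parametrization
is by arc length, and inside one closed ball `B̄(a_j, ρ)`. -/
lemma overlapLen_le (hinj : Function.Injective x) (hsk : IsSkeleton n x ρ k a t) {i j : ℕ}
    (hi : i < n) (hj : j ≤ k) :
    overlapLen (cumLen n x i) (cumLen n x (i+1))
      (skeletonBreak n x k t j) (skeletonBreak n x k t (j+1)) ≤ 2 * ρ := by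
  set s := max (cumLen n x i) (skeletonBreak n x k t j)
  set s' := min (cumLen n x (i+1)) (skeletonBreak n x k t (j+1))
  rcases le_or_gt s' s with hss' | hss'
  · rw [overlapLen, max_eq_left (sub_nonpos.2 hss')]
    linarith [hsk.radius_pos]
  have hball : ∀ σ, s ≤ σ → σ ≤ s' → dist (pathParam n x σ) (a j) ≤ ρ := fun σ h1 h2 =>
    hsk.pathParam_mem_closedBall hj ((le_max_right _ _).trans h1) (h2.trans (min_le_right _ _))
  have hdist := dist_pathParam hinj hi (le_max_left _ _) hss'.le (min_le_left _ _)
  rw [overlapLen, max_eq_right (sub_nonneg.2 hss'.le), ← hdist]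
  calc _ ≤ dist (pathParam n x s) (a j) + dist (pathParam n x s') (a j) := dist_triangle_right _ _ _
    _ ≤ 2 * ρ := by linarith [hball s le_rfl hss'.le, hball s' hss'.le le_rfl]

lemma pathLen_le (hinj : Function.Injective x) (hsk : IsSkeleton n x ρ k a t) :
    pathLen n x ≤ 2 * ρ * (n + k) := by
  have h := sub_le_of_overlapLen_le cumLen_mono hsk.monotone_skeletonBreak
    (by rw [cumLen_zero, hsk.skeletonBreak_zero])
    (by rw [cumLen_self, skeletonBreak, if_neg (Nat.not_succ_le_self k)])
    (by linarith [hsk.radius_pos]) fun i hi j hj _ => hsk.overlapLen_le hinj hi hj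
  rwa [cumLen_self, cumLen_zero, sub_zero] at h

lemma le_ncard_add_one (hinj : Function.Injective x) (hsk : IsSkeleton n x ρ k a t)
    {χ : Set (Euc d)} (hreg : ∀ i : Fin (n+1), 0 < (i : ℕ) → (i : ℕ) < n → x i ∈ χ)
    (hfin : (χ ∩ ⋃ j ∈ Finset.range (k+1), Metric.ball (a j) ρ).Finite) :
    n ≤ (χ ∩ ⋃ j ∈ Finset.range (k+1), Metric.ball (a j) ρ).ncard + 1 := by
  have h := Set.ncard_le_ncard_of_injOn (clampPt n x) (s := (Finset.Ioo 0 n : Set ℕ)) ?_ ?_ hfin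
  · rw [Set.ncard_coe_finset, Nat.card_Ioo] at h
    omega
  · intro m hm
    rw [Finset.coe_Ioo, Set.mem_Ioo] at hm
    rw [clampPt_of_le hm.2.le]
    refine ⟨hreg _ hm.1 hm.2, ?_⟩
    obtain ⟨j, hj, hmem⟩ := hsk.exists_pathParam_mem_ball (cumLen_nonneg m)
      (cumLen_self (x := x) ▸ cumLen_mono hm.2.le)
    rw [pathParam_cumLen hinj hm.2.le] at hmem
    exact Set.mem_biUnion (Finset.mem_range.2 (Nat.lt_succ_of_le hj)) hmem
  · intro m hm m' hm' h
    rw [Finset.coe_Ioo, Set.mem_Ioo] at hm hm'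
    rw [clampPt_of_le hm.2.le, clampPt_of_le hm'.2.le] at h
    simpa using hinj h

end IsSkeleton

theorem stmt17_general {d : ℕ} (χ : Set (Euc d))
    (hχ : ∀ s : Set (Euc d), Bornology.IsBounded s → (χ ∩ s).Finite)
    (n : ℕ) (x : Fin (n+1) → Euc d) (hinj : Function.Injective x)
    (hreg : ∀ i : Fin (n+1), 0 < (i : ℕ) → (i : ℕ) < n → x i ∈ χ)
    (k : ℕ) (a : ℕ → Euc d) (t : ℕ → ℝ)
    (hsk : IsSkeleton n x 1 k a t) :
    pathLen n x ≤ 2 * (k : ℝ) + 2 +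
      2 * ((χ ∩ ⋃ j ∈ Finset.range (k+1), Metric.ball (a j) 1).ncard : ℝ) := by
  set U := ⋃ j ∈ Finset.range (k+1), Metric.ball (a j) (1 : ℝ)
  have hfin : (χ ∩ U).Finite :=
    hχ U ((Bornology.isBounded_biUnion_finset _).2 fun j _ => Metric.isBounded_ball)
  have hlen : pathLen n x ≤ 2 * 1 * (n + k) := hsk.pathLen_le hinj
  have hcard : (n : ℝ) ≤ (χ ∩ U).ncard + 1 := by
    exact_mod_cast hsk.le_ncard_add_one hinj hreg hfin
  linarith

/-- Let χ be locally finite, π a χ-regular path from 0, and (a_0,…,a_k) its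
1-skeleton with k ≥ 1. Then ℓ(π) ≤ 2k + 2 + 2·card(χ ∩ ⋃_{j=0}^k B(a_j,1)). -/
theorem stmt17 {d : ℕ} (hd : 2 ≤ d) (χ : Set (Euc d))
    (hχ : ∀ s : Set (Euc d), Bornology.IsBounded s → (χ ∩ s).Finite)
    (n : ℕ) (x : Fin (n+1) → Euc d) (hinj : Function.Injective x)
    (hx0 : x 0 = 0) (hreg : ∀ i : Fin (n+1), 0 < (i : ℕ) → (i : ℕ) < n → x i ∈ χ)
    (k : ℕ) (hk : 1 ≤ k) (a : ℕ → Euc d) (t : ℕ → ℝ)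
    (hsk : IsSkeleton n x 1 k a t) :
    pathLen n x ≤ 2 * (k : ℝ) + 2 +
      2 * ((χ ∩ ⋃ j ∈ Finset.range (k+1), Metric.ball (a j) 1).ncard : ℝ) :=
  stmt17_general χ hχ n x hinj hreg k a t hsk
end
end
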